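/- Let g : ℝ^m → ℝ be concave and differentiable with L-Lipschitz gradient, attaining its maximum over ℝ₊^m at λ*. Then for every λ ≥ 0, ‖(∇g(λ))₊‖₂ ≤ sqrt(2L(g(λ*) − g(λ))), where (v)₊ denotes componentwise positive part. -/

import Mathlib

/-!
Let `λ₊ = (λ + ∇g(λ)/L)₊` be the projected gradient step and `d = λ₊ - λ`. The quadratic lower
bound for an `L`-smooth function and the projection inequality `⟪∇g(λ), d⟫ ≥ L ‖d‖²` give
`g(λ₊) - g(λ) ≥ L/2 ‖d‖²`, while coordinatewise `(∇g(λ))₊ ≤ |L d|`. Since `λ₊ ≥ 0`,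
`g(λ*) ≥ g(λ₊)`, and the bound follows.
-/

open InnerProductSpace RealInnerProductSpace

section LipschitzGradient

variable {E : Type*} [NormedAddCommGroup E] [InnerProductSpace ℝ E] [CompleteSpace E]
  {g : E → ℝ} {G : E → E} {L : ℝ}

lemma HasGradientAt.hasDerivAt_comp_line {g' x d : E} {t : ℝ}
    (hg : HasGradientAt g g' (x + t • d)) :
    HasDerivAt (fun t : ℝ => g (x + t • d)) ⟪g', d⟫ t := by
  have hline : HasDerivAt (fun t : ℝ => x + t • d) d t := by
    simpa using ((hasDerivAt_id t).smul_const d).const_add x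
  have h := hg.hasFDerivAt.comp_hasDerivAt t hline
  rwa [toDual_apply_apply] at h

/- Along `t ↦ x + t • (y - x)`, removing the linear part and adding `L/2 ‖y - x‖² t²` makes
`g` monotone on `t ≥ 0`, since the Lipschitz bound controls the change of the slope. -/
lemma add_inner_sub_sq_le_of_lipschitz_gradient (hg : ∀ x, HasGradientAt g (G x) x)
    (hLip : ∀ x y, ‖G x - G y‖ ≤ L * ‖x - y‖) (x y : E) :
    g x + ⟪G x, y - x⟫ - L / 2 * ‖y - x‖ ^ 2 ≤ g y := by
  set d := y - x
  let φ : ℝ → ℝ := fun t => g (x + t • d) - t * ⟪G x, d⟫ + L / 2 * ‖d‖ ^ 2 * t ^ 2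
  have hφ : ∀ t, HasDerivAt φ (⟪G (x + t • d) - G x, d⟫ + L * ‖d‖ ^ 2 * t) t := by
    intro t
    refine (((hg (x + t • d)).hasDerivAt_comp_line.sub
      ((hasDerivAt_id t).mul_const ⟪G x, d⟫)).add
      ((hasDerivAt_pow 2 t).const_mul (L / 2 * ‖d‖ ^ 2))).congr_deriv ?_
    rw [inner_sub_left, one_mul]
    ring
  have hφ_nonneg : ∀ t, 0 ≤ t → 0 ≤ ⟪G (x + t • d) - G x, d⟫ + L * ‖d‖ ^ 2 * t := by
    intro t ht
    have hGd : ‖G (x + t • d) - G x‖ ≤ L * (t * ‖d‖) := by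
      simpa [norm_smul, abs_of_nonneg ht] using hLip (x + t • d) x
    have hCS := neg_le_of_abs_le (abs_real_inner_le_norm (G (x + t • d) - G x) d)
    nlinarith [norm_nonneg d]
  have hmono : MonotoneOn φ (Set.Ici 0) :=
    monotoneOn_of_hasDerivWithinAt_nonneg (convex_Ici 0)
      (fun t _ => (hφ t).continuousAt.continuousWithinAt)
      (fun t _ => (hφ t).hasDerivWithinAt)
      (fun t ht => hφ_nonneg t (interior_subset ht))
  have h01 : φ 0 ≤ φ 1 := hmono Set.self_mem_Ici (Set.mem_Ici.mpr zero_le_one) zero_le_one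
  simp only [φ, zero_smul, add_zero, zero_mul, sub_zero, ne_eq, OfNat.ofNat_ne_zero,
    not_false_eq_true, zero_pow, mul_zero, one_smul, one_mul, one_pow, mul_one] at h01
  rw [add_sub_cancel] at h01
  linarith

end LipschitzGradient

section ProjectedGradientStep

variable {L a l : ℝ}

-- `max (l + a / L) 0 - l` is a coordinate of `d = (λ + ∇g(λ)/L)₊ - λ`.

lemma mul_sq_le_mul_projStep (hL : 0 < L) (hl : 0 ≤ l) :
    L * (max (l + a / L) 0 - l) ^ 2 ≤ a * (max (l + a / L) 0 - l) := by
  rcases le_total 0 (l + a / L) with h | h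
  · rw [max_eq_left h, add_sub_cancel_left]
    exact le_of_eq (by field_simp)
  · rw [max_eq_right h]
    have ha : a ≤ -(L * l) := by
      have := mul_le_mul_of_nonneg_left h hL.le
      rwa [mul_add, mul_div_cancel₀ a hL.ne', mul_zero, ← le_neg_iff_add_nonpos_left] at this
    nlinarith

lemma max_zero_le_abs_mul_projStep (hL : 0 < L) (hl : 0 ≤ l) :
    max a 0 ≤ |L * (max (l + a / L) 0 - l)| := by
  rcases le_total a 0 with ha | ha
  · rw [max_eq_right ha]
    exact abs_nonneg _
  · have h : 0 ≤ l + a / L := by positivity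
    rw [max_eq_left ha, max_eq_left h, add_sub_cancel_left, mul_div_cancel₀ a hL.ne']
    exact le_abs_self a

variable {ι : Type*} [Fintype ι] {x v d : EuclideanSpace ℝ ι}

lemma mul_norm_sq_le_inner_projStep (hL : 0 < L) (hx : ∀ i, 0 ≤ x i)
    (hd : ∀ i, d i = max (x i + v i / L) 0 - x i) :
    L * ‖d‖ ^ 2 ≤ ⟪v, d⟫ := by
  rw [EuclideanSpace.real_norm_sq_eq, Finset.mul_sum, PiLp.inner_apply]
  refine Finset.sum_le_sum fun i _ => ?_
  simpa [hd, mul_comm] using mul_sq_le_mul_projStep (a := v i) hL (hx i)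

lemma norm_posPart_le_mul_norm_projStep {w : EuclideanSpace ℝ ι} (hL : 0 < L)
    (hx : ∀ i, 0 ≤ x i) (hd : ∀ i, d i = max (x i + v i / L) 0 - x i)
    (hw : ∀ i, w i = max (v i) 0) :
    ‖w‖ ≤ L * ‖d‖ := by
  refine le_of_sq_le_sq ?_ (by positivity)
  rw [mul_pow, EuclideanSpace.real_norm_sq_eq, EuclideanSpace.real_norm_sq_eq, Finset.mul_sum]
  refine Finset.sum_le_sum fun i _ => ?_
  rw [hw, hd, ← mul_pow, ← sq_abs (L * _)]
  exact pow_le_pow_left₀ (le_max_right _ _) (max_zero_le_abs_mul_projStep hL (hx i)) 2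

end ProjectedGradientStep

theorem positive_part_gradient_bound_by_dual_gap_general
    (m : ℕ) (L : ℝ) (hL : 0 < L)
    (g : EuclideanSpace ℝ (Fin m) → ℝ)
    (G : EuclideanSpace ℝ (Fin m) → EuclideanSpace ℝ (Fin m))
    (hg : ∀ x, HasGradientAt g (G x) x)
    (hLip : ∀ x y, ‖G x - G y‖ ≤ L * ‖x - y‖)
    (lamStar : EuclideanSpace ℝ (Fin m))
    (hStarMax : ∀ μ : EuclideanSpace ℝ (Fin m), (∀ i, 0 ≤ μ i) → g μ ≤ g lamStar)
    (lam Gplus : EuclideanSpace ℝ (Fin m))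
    (hlam : ∀ i, 0 ≤ lam i)
    (hGp : ∀ i, Gplus i = max (G lam i) 0) :
    ‖Gplus‖ ≤ Real.sqrt (2 * L * (g lamStar - g lam)) := by
  set d : EuclideanSpace ℝ (Fin m) :=
    WithLp.toLp 2 (fun i => max (lam i + G lam i / L) 0 - lam i)
  have hd : ∀ i, d i = max (lam i + G lam i / L) 0 - lam i := fun i => rfl
  have hstep_nonneg : ∀ i, 0 ≤ (lam + d) i := by simp [hd]
  have hascent : g lam + L / 2 * ‖d‖ ^ 2 ≤ g (lam + d) := by
    have hdesc := add_inner_sub_sq_le_of_lipschitz_gradient hg hLip lam (lam + d)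
    rw [add_sub_cancel_left] at hdesc
    linarith [mul_norm_sq_le_inner_projStep hL hlam hd]
  have hGplus : ‖Gplus‖ ≤ L * ‖d‖ := norm_posPart_le_mul_norm_projStep hL hlam hd hGp
  refine Real.le_sqrt_of_sq_le ?_
  calc ‖Gplus‖ ^ 2 ≤ (L * ‖d‖) ^ 2 := pow_le_pow_left₀ (norm_nonneg _) hGplus 2
    _ = 2 * L * (L / 2 * ‖d‖ ^ 2) := by ring
    _ ≤ 2 * L * (g lamStar - g lam) := by
      gcongr
      linarith [hStarMax (lam + d) hstep_nonneg]

/-- Primal-feasibility-type bound: if concave `g` with `L`-Lipschitz gradient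
attains its maximum over the nonnegative orthant at `λ*`, then for every
`λ ≥ 0`, `‖(∇g(λ))₊‖₂ ≤ √(2L (g(λ*) - g(λ)))`. -/
theorem positive_part_gradient_bound_by_dual_gap
    (m : ℕ) (L : ℝ) (hL : 0 < L)
    (g : EuclideanSpace ℝ (Fin m) → ℝ)
    (G : EuclideanSpace ℝ (Fin m) → EuclideanSpace ℝ (Fin m))
    (hg : ∀ x, HasGradientAt g (G x) x)
    (hconc : ConcaveOn ℝ Set.univ g)
    (hLip : ∀ x y, ‖G x - G y‖ ≤ L * ‖x - y‖)
    (lamStar : EuclideanSpace ℝ (Fin m))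
    (hStarNonneg : ∀ i, 0 ≤ lamStar i)
    (hStarMax : ∀ μ : EuclideanSpace ℝ (Fin m), (∀ i, 0 ≤ μ i) → g μ ≤ g lamStar)
    (lam Gplus : EuclideanSpace ℝ (Fin m))
    (hlam : ∀ i, 0 ≤ lam i)
    (hGp : ∀ i, Gplus i = max (G lam i) 0) :
    ‖Gplus‖ ≤ Real.sqrt (2 * L * (g lamStar - g lam)) :=
  positive_part_gradient_bound_by_dual_gap_general m L hL g G hg hLip lamStar hStarMax lam Gplus
    hlam hGp
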